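/- Let $G$ be a group with finite symmetric generating set $S$, equipped with the left-invariant word metric $d_S$, acting transitively by isometries on a metric space $M$, and fix a basepoint $x_0 \in M$. Suppose that $M$ has asymptotic property C and that there exists $n \in \mathbb{N}$ such that for all $R > 0$ the quasi-stabilizer $W_R(x_0)$ (with the metric induced from $d_S$) has asymptotic dimension at most $n$. Then $G$ (with the word metric $d_S$) has asymptotic property C. -/

import Mathlib

open Metric Set ENNReal

/-- The distance between two subsets of a (pseudo e)metric space, valued in `ℝ≥0∞`
(so that the distance to/from the empty set is `∞`). -/
noncomputable def setEDist {X : Type*} [PseudoEMetricSpace X] (A B : Set X) : ℝ≥0∞ :=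
  ⨅ a ∈ A, ⨅ b ∈ B, edist a b

/-- A family `ℱ` of subsets of a metric space is `r`-disjoint if any two distinct members
are at distance greater than `r` from each other. -/
def RDisjoint {X : Type*} [PseudoMetricSpace X] (r : ℝ) (ℱ : Set (Set X)) : Prop :=
  ∀ F₁ ∈ ℱ, ∀ F₂ ∈ ℱ, F₁ ≠ F₂ → ENNReal.ofReal r < setEDist F₁ F₂

/-- A family `ℱ` of subsets of a metric space is uniformly bounded if there is `R > 0`
bounding the diameter of every member. -/
def UniformlyBounded {X : Type*} [PseudoMetricSpace X] (ℱ : Set (Set X)) : Prop :=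
  ∃ R > (0 : ℝ), ∀ F ∈ ℱ, ∀ x ∈ F, ∀ y ∈ F, dist x y ≤ R

/-- A metric space `X` has asymptotic dimension at most `n` if for every `r > 0` there are
`n + 1` uniformly bounded, `r`-disjoint families of subsets of `X` whose union covers `X`. -/
def AsDimLE (X : Type*) [PseudoMetricSpace X] (n : ℕ) : Prop :=
  ∀ r > (0 : ℝ), ∃ ℱ : Fin (n + 1) → Set (Set X),
    (∀ i, UniformlyBounded (ℱ i)) ∧ (∀ i, RDisjoint r (ℱ i)) ∧
    (⋃ i, ⋃ F ∈ ℱ i, F) = univ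

/-- A metric space `X` has asymptotic property C if for every sequence of real numbers
`0 < r 0 < r 1 < ⋯` there are `n ∈ ℕ` and uniformly bounded families `ℱ 0, …, ℱ n` of subsets
of `X` such that each `ℱ i` is `r i`-disjoint and the union of the families covers `X`. -/
def AsymptoticPropertyC (X : Type*) [PseudoMetricSpace X] : Prop :=
  ∀ r : ℕ → ℝ, 0 < r 0 → StrictMono r →
    ∃ (n : ℕ) (ℱ : Fin (n + 1) → Set (Set X)),
      (∀ i, UniformlyBounded (ℱ i)) ∧
      (∀ i : Fin (n + 1), RDisjoint (r i.val) (ℱ i)) ∧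
      (⋃ i, ⋃ F ∈ ℱ i, F) = univ

/-- The word length of `g` with respect to a generating set `S`: the minimal length of a
word in `S` whose product is `g`. -/
noncomputable def wordLength {G : Type*} [Group G] (S : Set G) (g : G) : ℕ :=
  sInf {n : ℕ | ∃ w : List G, (∀ x ∈ w, x ∈ S) ∧ w.length = n ∧ w.prod = g}

/-! The orbit map `g ↦ g • x₀` is Lipschitz for the word metric, and the preimage of a set of
diameter `≤ R` lies in a left translate of `W_R(x₀)`. Given scales `r`, cover `M` by families
`ℱ_j` that are `(K + 1) ρ_j`-disjoint, and cut the preimage of each member of `ℱ_j` by the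
`n + 1` families, translated from `W_R(x₀)`, that are `ρ_j`-disjoint. Pieces over different
members of `ℱ_j` are then separated by the Lipschitz bound, pieces over the same member by the
families of `W_R(x₀)`; choosing `ρ_j` as the largest scale among the `n + 1` labels of the
`j`-th block makes the `(m + 1)(n + 1)` resulting families satisfy property C. -/

section SetEDist

variable {X : Type*} [PseudoEMetricSpace X]

lemma setEDist_anti {A B A' B' : Set X} (hA : A' ⊆ A) (hB : B' ⊆ B) :
    setEDist A B ≤ setEDist A' B' :=
  le_iInf₂ fun a ha => le_iInf₂ fun b hb =>
    iInf₂_le_of_le a (hA ha) (iInf₂_le_of_le b (hB hb) le_rfl)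

lemma le_setEDist {A B : Set X} {c : ℝ≥0∞} (h : ∀ a ∈ A, ∀ b ∈ B, c ≤ edist a b) :
    c ≤ setEDist A B :=
  le_iInf₂ fun a ha => le_iInf₂ fun b hb => h a ha b hb

lemma setEDist_le_edist {A B : Set X} {a b : X} (ha : a ∈ A) (hb : b ∈ B) :
    setEDist A B ≤ edist a b :=
  iInf₂_le_of_le a ha (iInf₂_le_of_le b hb le_rfl)

lemma setEDist_image {Y : Type*} [PseudoEMetricSpace Y] {f : X → Y}
    (hf : ∀ a b, edist (f a) (f b) = edist a b) (A B : Set X) :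
    setEDist (f '' A) (f '' B) = setEDist A B := by
  simp only [setEDist, iInf_image, hf]

end SetEDist

def fiberRefinement {X Y : Type*} (f : X → Y) (ℱ : Set (Set Y)) (𝒢 : Set Y → Set (Set X)) :
    Set (Set X) :=
  ⋃ F ∈ ℱ, (· ∩ f ⁻¹' F) '' 𝒢 F

lemma mem_fiberRefinement {X Y : Type*} {f : X → Y} {ℱ : Set (Set Y)}
    {𝒢 : Set Y → Set (Set X)} {P : Set X} :
    P ∈ fiberRefinement f ℱ 𝒢 ↔ ∃ F ∈ ℱ, ∃ T ∈ 𝒢 F, T ∩ f ⁻¹' F = P := by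
  simp only [fiberRefinement, mem_iUnion₂, mem_image, exists_prop]

section Families

variable {X : Type*} [PseudoMetricSpace X]

lemma RDisjoint.mono {r r' : ℝ} {ℱ : Set (Set X)} (h : RDisjoint r' ℱ) (hr : r ≤ r') :
    RDisjoint r ℱ := fun F₁ h₁ F₂ h₂ hne =>
  (ENNReal.ofReal_le_ofReal hr).trans_lt (h F₁ h₁ F₂ h₂ hne)

/-- Bell–Dranishnikov's "`asdim 𝒜 ≤ n` uniformly"; the covering families may stick out of `A`. -/
def UniformAsDimLE (𝒜 : Set (Set X)) (n : ℕ) : Prop :=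
  ∀ r > (0 : ℝ), ∃ B : ℝ, ∀ A ∈ 𝒜, ∃ 𝒢 : Fin (n + 1) → Set (Set X),
    (∀ i, ∀ T ∈ 𝒢 i, ∀ a ∈ T, ∀ b ∈ T, dist a b ≤ B) ∧ (∀ i, RDisjoint r (𝒢 i)) ∧
    A ⊆ ⋃ i, ⋃ T ∈ 𝒢 i, T

lemma UniformAsDimLE.mono {𝒜 𝒜' : Set (Set X)} {n : ℕ} (h : UniformAsDimLE 𝒜 n)
    (h𝒜 : 𝒜' ⊆ 𝒜) : UniformAsDimLE 𝒜' n := fun r hr =>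
  (h r hr).imp fun _ hB A hA => hB A (h𝒜 hA)

lemma uniformlyBounded_fiberRefinement {Y : Type*} {f : X → Y} {ℱ : Set (Set Y)}
    {𝒢 : Set Y → Set (Set X)} {B : ℝ}
    (hB : ∀ F ∈ ℱ, ∀ T ∈ 𝒢 F, ∀ a ∈ T, ∀ b ∈ T, dist a b ≤ B) :
    UniformlyBounded (fiberRefinement f ℱ 𝒢) := by
  refine ⟨max B 1, by positivity, fun P hP a ha b hb => ?_⟩
  obtain ⟨F, hF, T, hT, rfl⟩ := mem_fiberRefinement.1 hP
  exact (hB F hF T hT a ha.1 b hb.1).trans (le_max_left _ _)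

lemma rDisjoint_fiberRefinement {Y : Type*} [PseudoMetricSpace Y] {f : X → Y} {K : NNReal}
    (hf : LipschitzWith K f) {r : ℝ} {ℱ : Set (Set Y)} (hℱ : RDisjoint (K * r) ℱ)
    {𝒢 : Set Y → Set (Set X)} (h𝒢 : ∀ F ∈ ℱ, RDisjoint r (𝒢 F)) :
    RDisjoint r (fiberRefinement f ℱ 𝒢) := by
  intro P₁ hP₁ P₂ hP₂ hne
  obtain ⟨F₁, hF₁, T₁, hT₁, rfl⟩ := mem_fiberRefinement.1 hP₁
  obtain ⟨F₂, hF₂, T₂, hT₂, rfl⟩ := mem_fiberRefinement.1 hP₂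
  by_cases hF : F₁ = F₂
  · subst hF
    have hT : T₁ ≠ T₂ := by rintro rfl; exact hne rfl
    exact (h𝒢 F₁ hF₁ T₁ hT₁ T₂ hT₂ hT).trans_le
      (setEDist_anti inter_subset_left inter_subset_left)
  · -- Dividing the infimum by `K`, instead of comparing pairs of points, keeps the inequality
    -- strict; `x / 0 = ∞` takes care of `K = 0`.
    have hfar : setEDist F₁ F₂ / K ≤ setEDist (T₁ ∩ f ⁻¹' F₁) (T₂ ∩ f ⁻¹' F₂) :=
      le_setEDist fun a ha b hb => ENNReal.div_le_of_le_mul <|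
        (setEDist_le_edist (a := f a) (b := f b) ha.2 hb.2).trans
          ((hf.edist_le_mul a b).trans_eq (mul_comm _ _))
    refine lt_of_lt_of_le ?_ hfar
    rw [ENNReal.lt_div_iff_mul_lt (Or.inr ofReal_ne_top) (Or.inl coe_ne_top), mul_comm,
      ← ofReal_coe_nnreal, ← ENNReal.ofReal_mul K.coe_nonneg]
    exact hℱ F₁ hF₁ F₂ hF₂ hF

end Families

lemma asymptoticPropertyC_of_prod_index {X : Type*} [PseudoMetricSpace X]
    (h : ∀ r : ℕ → ℝ, 0 < r 0 → StrictMono r → ∃ (m n : ℕ)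
      (ℱ : Fin (m + 1) → Fin (n + 1) → Set (Set X)), (∀ j i, UniformlyBounded (ℱ j i)) ∧
      (∀ (j : Fin (m + 1)) (i : Fin (n + 1)), RDisjoint (r (i + (n + 1) * j)) (ℱ j i)) ∧
      (⋃ j, ⋃ i, ⋃ F ∈ ℱ j i, F) = univ) :
    AsymptoticPropertyC X := by
  intro r hr0 hr
  obtain ⟨m, n, ℱ, hb, hd, hc⟩ := h r hr0 hr
  let e : Fin (m * (n + 1) + n + 1) ≃ Fin (m + 1) × Fin (n + 1) :=
    (finCongr (by ring)).trans finProdFinEquiv.symm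
  refine ⟨m * (n + 1) + n, fun k => ℱ (e k).1 (e k).2, fun k => hb _ _, fun k => ?_, ?_⟩
  · -- `finProdFinEquiv` labels `(j, i)` by `i + (n + 1) * j`.
    have hk : (k : ℕ) = (e k).2 + (n + 1) * (e k).1 := by
      conv_lhs => rw [← e.symm_apply_apply k]
      rfl
    rw [hk]
    exact hd _ _
  · rw [← hc]
    exact (e.iSup_comp (g := fun p => ⋃ F ∈ ℱ p.1 p.2, F)).trans iSup_prod

theorem asymptoticPropertyC_of_lipschitzWith {X Y : Type*} [PseudoMetricSpace X]
    [PseudoMetricSpace Y] {f : X → Y} {K : NNReal} (hf : LipschitzWith K f)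
    (hY : AsymptoticPropertyC Y) {n : ℕ}
    (hfib : ∀ R > (0 : ℝ),
      UniformAsDimLE (preimage f '' {F | ∀ y ∈ F, ∀ z ∈ F, dist y z ≤ R}) n) :
    AsymptoticPropertyC X := by
  refine asymptoticPropertyC_of_prod_index fun r hr0 hr => ?_
  -- `K + 1` rather than `K`, so that the scales `L * ρ j` are positive.
  set L : NNReal := K + 1
  have hL : LipschitzWith L f := hf.weaken le_self_add
  set ρ : ℕ → ℝ := fun j => r (n + (n + 1) * j)
  have hρ : StrictMono ρ := fun a b hab => hr (by simp only [add_lt_add_iff_left]; gcongr)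
  have hρpos : ∀ j, 0 < ρ j := fun j => hr0.trans_le (hr.monotone (Nat.zero_le _))
  obtain ⟨m, ℱ, hℱb, hℱd, hℱc⟩ :=
    hY (fun j => L * ρ j) (mul_pos (by positivity) (hρpos 0)) (hρ.const_mul (by positivity))
  choose D hDpos hD using hℱb
  have hmem : ∀ j, ∀ F ∈ ℱ j,
      f ⁻¹' F ∈ preimage f '' {F | ∀ y ∈ F, ∀ z ∈ F, dist y z ≤ D j} :=
    fun j F hF => ⟨F, hD j F hF, rfl⟩
  choose B hB using fun j => hfib (D j) (hDpos j) (ρ j) (hρpos j)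
  choose! 𝒢 h𝒢b h𝒢d h𝒢c using hB
  refine ⟨m, n, fun j i => fiberRefinement f (ℱ j) (fun F => 𝒢 j (f ⁻¹' F) i),
    fun j i => uniformlyBounded_fiberRefinement fun F hF => h𝒢b j _ (hmem j F hF) i,
    fun j i => ?_, eq_univ_of_forall fun x => ?_⟩
  · exact (rDisjoint_fiberRefinement hL (hℱd j) fun F hF => h𝒢d j _ (hmem j F hF) i).mono
      (hr.monotone (by omega))
  · obtain ⟨j, F, hF, hxF⟩ : ∃ j, ∃ F ∈ ℱ j, f x ∈ F := by
      have hx : f x ∈ ⋃ j, ⋃ F ∈ ℱ j, F := hℱc ▸ mem_univ _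
      simpa only [mem_iUnion, exists_prop] using hx
    obtain ⟨i, T, hT, hxT⟩ : ∃ i, ∃ T ∈ 𝒢 j (f ⁻¹' F) i, x ∈ T := by
      simpa only [mem_iUnion, exists_prop] using h𝒢c j _ (hmem j F hF) hxF
    simp only [mem_iUnion, exists_prop]
    exact ⟨j, i, _, mem_fiberRefinement.2 ⟨F, hF, T, hT, rfl⟩, hxT, hxF⟩

section Groups

variable {G : Type*} [Group G]

lemma isIsometricSMul_self_of_dist_eq [PseudoMetricSpace G] {ℓ : G → ℝ}
    (hℓ : ∀ g h : G, dist g h = ℓ (g⁻¹ * h)) : IsIsometricSMul G G :=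
  ⟨fun k => Isometry.of_dist_eq fun g h => by
    simp only [smul_eq_mul, hℓ, mul_inv_rev, mul_assoc, inv_mul_cancel_left]⟩

lemma exists_list_length_eq_wordLength {S : Set G} (hSsymm : S⁻¹ = S)
    (hSgen : Subgroup.closure S = ⊤) (g : G) :
    ∃ w : List G, (∀ s ∈ w, s ∈ S) ∧ w.length = wordLength S g ∧ w.prod = g := by
  have hg : g ∈ (Subgroup.closure S).toSubmonoid := hSgen ▸ Subgroup.mem_top g
  rw [Subgroup.closure_toSubmonoid, hSsymm, union_self] at hg
  obtain ⟨w, hwS, hwg⟩ := Submonoid.exists_list_of_mem_closure hg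
  have hne : {m : ℕ | ∃ w : List G, (∀ s ∈ w, s ∈ S) ∧ w.length = m ∧ w.prod = g}.Nonempty :=
    ⟨w.length, w, hwS, rfl, hwg⟩
  exact Nat.sInf_mem hne

variable {M : Type*} [PseudoMetricSpace M] [MulAction G M] [IsIsometricSMul G M]

lemma dist_list_prod_smul_le {S : Set G} {x : M} {C : ℝ} (hC : ∀ s ∈ S, dist x (s • x) ≤ C) :
    ∀ w : List G, (∀ s ∈ w, s ∈ S) → dist x (w.prod • x) ≤ C * w.length
  | [], _ => by simp
  | s :: w, hw => calc
      dist x ((s :: w).prod • x) ≤ dist x (s • x) + dist (s • x) (s • w.prod • x) := by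
        rw [List.prod_cons, mul_smul]
        exact dist_triangle _ _ _
      _ ≤ C + C * w.length := by
        rw [dist_smul]
        exact add_le_add (hC s (hw s List.mem_cons_self))
          (dist_list_prod_smul_le hC w fun t ht => hw t (List.mem_cons_of_mem s ht))
      _ = C * (s :: w).length := by
        rw [List.length_cons]
        push_cast
        ring

lemma exists_lipschitzWith_smul_of_dist_eq_wordLength [PseudoMetricSpace G] {S : Set G}
    (hSfin : S.Finite) (hSsymm : S⁻¹ = S) (hSgen : Subgroup.closure S = ⊤)
    (hword : ∀ g h : G, dist g h = (wordLength S (g⁻¹ * h) : ℝ)) (x : M) :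
    ∃ K, LipschitzWith K (fun g : G => g • x) := by
  obtain ⟨C, hC⟩ := (hSfin.image fun s => dist x (s • x)).bddAbove
  refine ⟨⟨max C 0, le_max_right _ _⟩, LipschitzWith.of_dist_le_mul fun g h => ?_⟩
  obtain ⟨w, hwS, hwl, hwg⟩ := exists_list_length_eq_wordLength hSsymm hSgen (g⁻¹ * h)
  calc dist (g • x) (h • x) = dist x (w.prod • x) := by
        rw [hwg, ← dist_smul g x, smul_smul, mul_inv_cancel_left]
    _ ≤ max C 0 * w.length :=
        dist_list_prod_smul_le (fun s hs => (hC (mem_image_of_mem _ hs)).trans (le_max_left _ _))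
          w hwS
    _ = max C 0 * dist g h := by rw [hword, hwl]

open scoped Pointwise in
lemma exists_preimage_smul_subset_smul (x : M) {R : ℝ} {F : Set M}
    (hF : ∀ y ∈ F, ∀ z ∈ F, dist y z ≤ R) :
    ∃ g : G, (· • x) ⁻¹' F ⊆ g • {h : G | dist x (h • x) ≤ R} := by
  by_cases hx : ∃ g : G, g • x ∈ F
  · obtain ⟨g, hg⟩ := hx
    refine ⟨g, fun h hh => mem_smul_set_iff_inv_smul_mem.2 ?_⟩
    calc dist x ((g⁻¹ • h) • x) = dist (g • x) (h • x) := by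
          rw [← dist_smul g, smul_smul, smul_eq_mul, mul_inv_cancel_left]
      _ ≤ R := hF _ hg _ hh
  · exact ⟨1, fun h hh => (hx ⟨h, hh⟩).elim⟩

open scoped Pointwise in
lemma uniformAsDimLE_subset_smul [PseudoMetricSpace G] [IsIsometricSMul G G] {W : Set G}
    {n : ℕ} (hW : AsDimLE W n) : UniformAsDimLE {A | ∃ g : G, A ⊆ g • W} n := by
  intro r hr
  obtain ⟨𝒢, hb, hd, hc⟩ := hW r hr
  choose B hBpos hB using hb
  have hBsum (i) : B i ≤ ∑ j, B j :=
    Finset.single_le_sum (fun j _ => (hBpos j).le) (Finset.mem_univ i)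
  refine ⟨∑ j, B j, ?_⟩
  rintro A ⟨g, hA⟩
  have hiso : ∀ a b : W, edist (g * (a : G)) (g * b) = edist a b := fun a b =>
    edist_mul_left g a b
  refine ⟨fun i => (fun T => (fun t : W => g * (t : G)) '' T) '' 𝒢 i, ?_, ?_, ?_⟩
  · rintro i _ ⟨T, hT, rfl⟩ _ ⟨a, ha, rfl⟩ _ ⟨b, hb, rfl⟩
    rw [dist_mul_left]
    exact (hB i T hT a ha b hb).trans (hBsum i)
  · rintro i _ ⟨T₁, hT₁, rfl⟩ _ ⟨T₂, hT₂, rfl⟩ hne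
    rw [setEDist_image hiso]
    exact hd i T₁ hT₁ T₂ hT₂ fun h => hne (h ▸ rfl)
  · intro a haA
    obtain ⟨w, hw, rfl⟩ := mem_smul_set.1 (hA haA)
    have hwU : (⟨w, hw⟩ : W) ∈ ⋃ i, ⋃ T ∈ 𝒢 i, T := hc ▸ mem_univ _
    simp only [mem_iUnion, exists_prop] at hwU ⊢
    obtain ⟨i, T, hT, hwT⟩ := hwU
    exact ⟨i, _, ⟨T, hT, rfl⟩, ⟨w, hw⟩, hwT, rfl⟩

end Groups

theorem asymptoticPropertyC_of_isometric_action_general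
    {G M : Type*} [Group G] [MetricSpace G] [MetricSpace M] [MulAction G M]
    (S : Set G) (hSfin : S.Finite) (hSsymm : S⁻¹ = S)
    (hSgen : Subgroup.closure S = ⊤)
    (hword : ∀ g h : G, dist g h = (wordLength S (g⁻¹ * h) : ℝ))
    (hiso : ∀ (g : G) (y z : M), dist (g • y) (g • z) = dist y z)
    (x₀ : M)
    (hM : AsymptoticPropertyC M)
    (n : ℕ)
    (hW : ∀ R > (0 : ℝ), AsDimLE ↥{g : G | dist x₀ (g • x₀) ≤ R} n) :
    AsymptoticPropertyC G := by
  have : IsIsometricSMul G M := ⟨fun g => Isometry.of_dist_eq (hiso g)⟩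
  have : IsIsometricSMul G G := isIsometricSMul_self_of_dist_eq (ℓ := fun g => wordLength S g) hword
  obtain ⟨K, hK⟩ := exists_lipschitzWith_smul_of_dist_eq_wordLength hSfin hSsymm hSgen hword x₀
  refine asymptoticPropertyC_of_lipschitzWith (n := n) hK hM fun R hR => ?_
  refine (uniformAsDimLE_subset_smul (hW R hR)).mono ?_
  rintro _ ⟨F, hF, rfl⟩
  exact exists_preimage_smul_subset_smul x₀ hF

/-- If a group `G` with finite symmetric generating set `S`, equipped with the left-invariant
word metric, acts transitively by isometries on a metric space `M` which has asymptotic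
property C, and there is `n` such that every quasi-stabilizer `W_R(x₀)` (with the induced
metric) has asymptotic dimension at most `n`, then `G` has asymptotic property C. -/
theorem asymptoticPropertyC_of_isometric_action
    {G M : Type*} [Group G] [MetricSpace G] [MetricSpace M] [MulAction G M]
    (S : Set G) (hSfin : S.Finite) (hSsymm : S⁻¹ = S)
    (hSgen : Subgroup.closure S = ⊤)
    (hword : ∀ g h : G, dist g h = (wordLength S (g⁻¹ * h) : ℝ))
    (hiso : ∀ (g : G) (y z : M), dist (g • y) (g • z) = dist y z)
    (htrans : ∀ y z : M, ∃ g : G, g • y = z)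
    (x₀ : M)
    (hM : AsymptoticPropertyC M)
    (n : ℕ)
    (hW : ∀ R > (0 : ℝ), AsDimLE ↥{g : G | dist x₀ (g • x₀) ≤ R} n) :
    AsymptoticPropertyC G :=
  asymptoticPropertyC_of_isometric_action_general S hSfin hSsymm hSgen hword hiso x₀ hM n hW
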